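/- Let J:ℝ→ℝ be convex and define ρ_J(z) = min_{x∈ℝ} {½(z−x)² + J(x)}. Let Y ∈ ℝⁿ, X ∈ ℝ^{n×p} with full column rank, let X̃ have orthonormal rows with null(X̃) = image(X), and set Ỹ = X̃Y. Then the minimizers of the regularized least-squares problem min_{β} ½‖Ỹ − X̃β‖² + Σ_{i=1}^n J(β_i) are in one-to-one correspondence with the minimizers of the M-estimation problem min_{θ} Σ_{i=1}^n ρ_J(Y_i − ⟨X_i,θ⟩), via the mappings β̂ = Y − Xθ̂ − u with u ∈ null(Xᵀ) ∩ ∂ρ_J(Y − Xθ̂), and θ̂ = (XᵀX)^{−1}Xᵀ(Y − β̂). -/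

import Mathlib

/-- The Moreau envelope `ρ_J(z) = min_x { ½(z-x)² + J(x) }` of a convex penalty `J`. -/
noncomputable def moreau (J : ℝ → ℝ) (z : ℝ) : ℝ :=
  ⨅ x : ℝ, ((1 : ℝ) / 2) * (z - x) ^ 2 + J x

/-- The subgradient of the separable convex function `v ↦ Σᵢ g(vᵢ)` at `x`. -/
def vsubderiv (g : ℝ → ℝ) {n : ℕ} (x : Fin n → ℝ) : Set (Fin n → ℝ) :=
  {u | ∀ y : Fin n → ℝ, (∑ i, g (x i)) + (∑ i, u i * (y i - x i)) ≤ ∑ i, g (y i)}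

section Scalar
variable {J : ℝ → ℝ}

/-- Every convex real function has a subgradient at every point. -/
lemma exists_subgrad (hJ : ConvexOn ℝ Set.univ J) (x₀ : ℝ) : ∃ s : ℝ, ∀ x, J x₀ + s * (x - x₀) ≤ J x := by
  set A : Set ℝ := (fun a => (J x₀ - J a) / (x₀ - a)) '' Set.Iio x₀ with hA
  have hne : A.Nonempty := ⟨_, ⟨x₀ - 1, by simp, rfl⟩⟩
  have hub : ∀ x > x₀, ∀ b ∈ A, b ≤ (J x - J x₀) / (x - x₀) := by
    rintro x hx b ⟨a, ha, rfl⟩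
    exact hJ.slope_mono_adjacent trivial trivial ha hx
  have hbdd : BddAbove A := ⟨(J (x₀ + 1) - J x₀) / (x₀ + 1 - x₀), fun b hb =>
    hub (x₀ + 1) (by linarith) b hb⟩
  refine ⟨sSup A, fun x => ?_⟩
  rcases lt_trichotomy x x₀ with h | h | h
  · have : (J x₀ - J x) / (x₀ - x) ≤ sSup A := le_csSup hbdd ⟨x, h, rfl⟩
    have hx : (0:ℝ) < x₀ - x := by linarith
    rw [div_le_iff₀ hx] at this
    nlinarith
  · simp [h]
  · have : sSup A ≤ (J x - J x₀) / (x - x₀) := csSup_le hne (hub x h)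
    have hx : (0:ℝ) < x - x₀ := by linarith
    rw [le_div_iff₀ hx] at this
    nlinarith

def IsProx (J : ℝ → ℝ) (z x : ℝ) : Prop :=
  ∀ y, ((1:ℝ)/2) * (z - x) ^ 2 + J x ≤ ((1:ℝ)/2) * (z - y) ^ 2 + J y

lemma exists_prox (hJ : ConvexOn ℝ Set.univ J) (z : ℝ) : ∃ x, IsProx J z x := by
  obtain ⟨s, hs⟩ := exists_subgrad hJ 0
  set f : ℝ → ℝ := fun x => ((1:ℝ)/2) * (z - x) ^ 2 + J x with hf
  have hcont : Continuous f := by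
    have hJc : ContinuousOn J Set.univ :=
      hJ.continuousOn isOpen_univ
    have : Continuous J := continuousOn_univ.1 hJc
    fun_prop
  -- lower bound : f x ≥ 1/2*(x - c)^2 + C
  set c : ℝ := z - s with hc
  set C : ℝ := J 0 + s * z - s^2/2 with hC
  have hlow : ∀ x, ((1:ℝ)/2) * (x - c) ^ 2 + C ≤ f x := by
    intro x
    have := hs x
    simp only [hf, hc, hC]
    nlinarith [this]
  set r : ℝ := Real.sqrt (2 * |f z - C| + 2) with hr
  have hr0 : 0 < r := Real.sqrt_pos.2 (by positivity)
  have hr2 : r ^ 2 = 2 * |f z - C| + 2 := Real.sq_sqrt (by positivity)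
  have hlow2 := hlow
  have hr2b := hr2
  set K : Set ℝ := Set.Icc (c - r) (c + r) with hK
  have hKc : IsCompact K := isCompact_Icc
  have hKne : K.Nonempty := Set.nonempty_Icc.2 (by linarith)
  obtain ⟨x0, hx0K, hx0⟩ := hKc.exists_isMinOn hKne hcont.continuousOn
  have hfe : ∀ w, f w = ((1:ℝ)/2) * (z - w) ^ 2 + J w := fun w => by rw [hf]
  clear hf hc hC hr hcont hlow
  clear_value f c C r
  have hout : ∀ x ∉ K, f z < f x := by
    intro x hx
    have h1 : r ^ 2 < (x - c) ^ 2 := by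
      simp only [hK, Set.mem_Icc, not_and_or, not_le] at hx
      rcases hx with h | h <;> nlinarith
    nlinarith [hlow2 x, hlow2 z, le_abs_self (f z - C), hr2b]
  have hzK : z ∈ K := by
    by_contra hzk
    exact lt_irrefl _ (hout z hzk)
  refine ⟨x0, fun y => ?_⟩
  rw [← hfe, ← hfe]
  by_cases hy : y ∈ K
  · exact hx0 hy
  · exact le_of_lt (lt_of_le_of_lt (hx0 hzK) (hout y hy))

lemma bddBelow_moreau (hJ : ConvexOn ℝ Set.univ J) (z : ℝ) :
    BddBelow (Set.range fun x => ((1:ℝ)/2) * (z - x) ^ 2 + J x) := by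
  obtain ⟨x, hx⟩ := exists_prox hJ z
  exact ⟨_, by rintro _ ⟨y, rfl⟩; exact hx y⟩

lemma moreau_le (hJ : ConvexOn ℝ Set.univ J) (z x : ℝ) : moreau J z ≤ ((1:ℝ)/2) * (z - x) ^ 2 + J x :=
  ciInf_le (bddBelow_moreau hJ z) x

lemma moreau_prox_eq (hJ : ConvexOn ℝ Set.univ J) {z x : ℝ} (hx : IsProx J z x) :
    moreau J z = ((1:ℝ)/2) * (z - x) ^ 2 + J x :=
  le_antisymm (moreau_le hJ z x) (le_ciInf hx)

lemma prox_J_subgrad (hJ : ConvexOn ℝ Set.univ J) {z x : ℝ} (hx : IsProx J z x) :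
    ∀ y, J x + (z - x) * (y - x) ≤ J y := by
  intro y
  rcases eq_or_ne (y - x) 0 with h0 | h0
  · have hyx : y = x := by linarith [sub_eq_zero.1 h0]
    simp [hyx]
  set d : ℝ := y - x with hd
  clear_value d
  have key : ∀ t : ℝ, 0 < t → t ≤ 1 → (z - x) * d - t * d ^ 2 / 2 ≤ J y - J x := by
    intro t ht ht1
    have hmin := hx (x + t * d)
    have hconv := hJ.2 (Set.mem_univ x) (Set.mem_univ y)
      (by linarith : (0:ℝ) ≤ 1 - t) (le_of_lt ht) (by ring)
    simp only [smul_eq_mul] at hconv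
    have hxy : (1 - t) * x + t * y = x + t * d := by rw [hd]; ring
    rw [hxy] at hconv
    nlinarith
  have : ∀ ε > (0:ℝ), (z - x) * d ≤ J y - J x + ε := by
    intro ε hε
    have hd2 : 0 < d ^ 2 := by positivity
    set t : ℝ := min 1 (2 * ε / d ^ 2) with ht
    have ht0 : 0 < t := lt_min one_pos (by positivity)
    have ht1 : t ≤ 1 := min_le_left _ _
    have htr : t ≤ 2 * ε / d ^ 2 := min_le_right _ _
    clear_value t
    have htd : t * d ^ 2 / 2 ≤ ε := by
      rw [le_div_iff₀ hd2] at htr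
      linarith
    linarith [key t ht0 ht1]
  have h2 := le_of_forall_pos_le_add this
  rw [hd] at h2 ⊢
  linarith

lemma moreau_lower (hJ : ConvexOn ℝ Set.univ J) {z x : ℝ} (hx : IsProx J z x) :
    ∀ y, moreau J z + (z - x) * (y - z) ≤ moreau J y := by
  intro y
  rw [moreau_prox_eq hJ hx]
  refine le_ciInf fun w => ?_
  have := prox_J_subgrad hJ hx w
  nlinarith [sq_nonneg ((z - x) - (y - w))]

lemma moreau_upper (hJ : ConvexOn ℝ Set.univ J) {z x : ℝ} (hx : IsProx J z x) :
    ∀ y, moreau J y ≤ moreau J z + (z - x) * (y - z) + ((1:ℝ)/2) * (y - z) ^ 2 := by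
  intro y
  rw [moreau_prox_eq hJ hx]
  have := moreau_le hJ y x
  nlinarith

lemma subgrad_moreau_eq (hJ : ConvexOn ℝ Set.univ J) {z x u : ℝ} (hx : IsProx J z x)
    (hu : ∀ y, moreau J z + u * (y - z) ≤ moreau J y) : u = z - x := by
  have key : ∀ t : ℝ, (u - (z - x)) * t ≤ ((1:ℝ)/2) * t ^ 2 := by
    intro t
    have h1 := hu (z + t)
    have h2 := moreau_upper hJ hx (z + t)
    simp only [add_sub_cancel_left] at h1 h2
    nlinarith
  have := key (u - (z - x))
  nlinarith

lemma moreau_subgrad_val (hJ : ConvexOn ℝ Set.univ J) {z u : ℝ}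
    (hu : ∀ y, moreau J z + u * (y - z) ≤ moreau J y) :
    moreau J z = ((1:ℝ)/2) * u ^ 2 + J (z - u) := by
  obtain ⟨x, hx⟩ := exists_prox hJ z
  have he : u = z - x := subgrad_moreau_eq hJ hx hu
  have hxz : x = z - u := by linarith
  rw [moreau_prox_eq hJ hx, hxz]
  ring_nf

end Scalar

section Vec
open Matrix
variable {g : ℝ → ℝ} {m : ℕ}

lemma vsubderiv_coord {x u : Fin m → ℝ} (hu : u ∈ vsubderiv g x) (i : Fin m) (y : ℝ) :
    g (x i) + u i * (y - x i) ≤ g y := by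
  have h := hu (Function.update x i y)
  have e1 : ∑ j, (g (Function.update x i y j) - g (x j)) = g y - g (x i) := by
    rw [Finset.sum_eq_single i]
    · simp
    · intro j _ hj; simp [Function.update_of_ne hj]
    · simp
  have e2 : ∑ j, u j * (Function.update x i y j - x j) = u i * (y - x i) := by
    rw [Finset.sum_eq_single i]
    · simp
    · intro j _ hj; simp [Function.update_of_ne hj]
    · simp
  rw [e2] at h
  rw [Finset.sum_sub_distrib] at e1
  linarith

lemma vsubderiv_of_coord {x u : Fin m → ℝ}
    (h : ∀ i (y : ℝ), g (x i) + u i * (y - x i) ≤ g y) : u ∈ vsubderiv g x := by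
  intro y
  rw [← Finset.sum_add_distrib]
  exact Finset.sum_le_sum fun i _ => h i (y i)

lemma sum_sq_dot (a b : Fin m → ℝ) : ∑ i, (a i - b i) ^ 2 = (a - b) ⬝ᵥ (a - b) := by
  simp only [dotProduct, Pi.sub_apply]
  exact Finset.sum_congr rfl fun i _ => by ring

lemma dot_self_nonneg (a : Fin m → ℝ) : 0 ≤ a ⬝ᵥ a :=
  Finset.sum_nonneg fun i _ => mul_self_nonneg _

end Vec


section Mat
open Matrix
variable {n p q : ℕ}

lemma dp1 {a b : ℕ} (A : Matrix (Fin a) (Fin b) ℝ) (u : Fin a → ℝ) (w : Fin b → ℝ) :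
    A.transpose.mulVec u ⬝ᵥ w = u ⬝ᵥ A.mulVec w := by
  rw [Matrix.mulVec_transpose, ← Matrix.dotProduct_mulVec]

lemma hQsym (Xt : Matrix (Fin q) (Fin n) ℝ) (v w : Fin n → ℝ) :
    (Xt.transpose * Xt).mulVec v ⬝ᵥ w = v ⬝ᵥ (Xt.transpose * Xt).mulVec w := by
  rw [← Matrix.mulVec_mulVec, ← Matrix.mulVec_mulVec, dp1, dotProduct_comm v,
    dp1, dotProduct_comm]

lemma hXtX {X : Matrix (Fin n) (Fin p) ℝ} {Xt : Matrix (Fin q) (Fin n) ℝ}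
    (hXtNull : LinearMap.ker Xt.mulVecLin = LinearMap.range X.mulVecLin)
    (w : Fin p → ℝ) : Xt.mulVec (X.mulVec w) = 0 := by
  have hmem : X.mulVec w ∈ LinearMap.range X.mulVecLin := ⟨w, rfl⟩
  rw [← hXtNull, LinearMap.mem_ker] at hmem
  exact hmem

lemma hQX {X : Matrix (Fin n) (Fin p) ℝ} {Xt : Matrix (Fin q) (Fin n) ℝ}
    (hXtNull : LinearMap.ker Xt.mulVecLin = LinearMap.range X.mulVecLin)
    (w : Fin p → ℝ) : (Xt.transpose * Xt).mulVec (X.mulVec w) = 0 := by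
  rw [← Matrix.mulVec_mulVec, hXtX hXtNull, Matrix.mulVec_zero]

lemma hQQ {Xt : Matrix (Fin q) (Fin n) ℝ} (hXtOrth : Xt * Xt.transpose = 1) (v : Fin n → ℝ) :
    (Xt.transpose * Xt).mulVec ((Xt.transpose * Xt).mulVec v) = (Xt.transpose * Xt).mulVec v := by
  have hm : Xt.transpose * Xt * (Xt.transpose * Xt) = Xt.transpose * Xt := by
    calc Xt.transpose * Xt * (Xt.transpose * Xt) = Xt.transpose * (Xt * Xt.transpose) * Xt := by
          simp only [Matrix.mul_assoc]
      _ = Xt.transpose * Xt := by rw [hXtOrth, Matrix.mul_one]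
  rw [Matrix.mulVec_mulVec, hm]

lemma hIQ {X : Matrix (Fin n) (Fin p) ℝ} {Xt : Matrix (Fin q) (Fin n) ℝ}
    (hXtOrth : Xt * Xt.transpose = 1)
    (hXtNull : LinearMap.ker Xt.mulVecLin = LinearMap.range X.mulVecLin) (v : Fin n → ℝ) :
    ∃ w, v - (Xt.transpose * Xt).mulVec v = X.mulVec w := by
  have hker : Xt.mulVecLin (v - (Xt.transpose * Xt).mulVec v) = 0 := by
    simp only [Matrix.mulVecLin_apply, Matrix.mulVec_sub, Matrix.mulVec_mulVec]
    rw [← Matrix.mul_assoc, hXtOrth, Matrix.one_mul, sub_self]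
  have hmem : v - (Xt.transpose * Xt).mulVec v ∈ LinearMap.range X.mulVecLin := by
    rw [← hXtNull, LinearMap.mem_ker]; exact hker
  obtain ⟨w, hw⟩ := hmem
  exact ⟨w, hw.symm⟩

lemma hXTQ {X : Matrix (Fin n) (Fin p) ℝ} {Xt : Matrix (Fin q) (Fin n) ℝ}
    (hXtNull : LinearMap.ker Xt.mulVecLin = LinearMap.range X.mulVecLin) (v : Fin n → ℝ) :
    X.transpose.mulVec ((Xt.transpose * Xt).mulVec v) = 0 := by
  refine dotProduct_self_eq_zero.1 ?_
  rw [dp1, hQsym, hQX hXtNull, dotProduct_zero]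

lemma quad_eq {Xt : Matrix (Fin q) (Fin n) ℝ} (hXtOrth : Xt * Xt.transpose = 1) (v : Fin n → ℝ) :
    Xt.mulVec v ⬝ᵥ Xt.mulVec v
      = (Xt.transpose * Xt).mulVec v ⬝ᵥ (Xt.transpose * Xt).mulVec v := by
  rw [hQsym, hQQ hXtOrth, ← Matrix.mulVec_mulVec, ← dp1, dotProduct_comm]

lemma pythagoras {X : Matrix (Fin n) (Fin p) ℝ} {Xt : Matrix (Fin q) (Fin n) ℝ}
    (hXtOrth : Xt * Xt.transpose = 1)
    (hXtNull : LinearMap.ker Xt.mulVecLin = LinearMap.range X.mulVecLin)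
    (v : Fin n → ℝ) (θ : Fin p → ℝ) :
    (Xt.transpose * Xt).mulVec v ⬝ᵥ (Xt.transpose * Xt).mulVec v
      ≤ (v - X.mulVec θ) ⬝ᵥ (v - X.mulVec θ) := by
  obtain ⟨w, hw⟩ := hIQ hXtOrth hXtNull (X := X) v
  have hd : v - X.mulVec θ = (Xt.transpose * Xt).mulVec v + X.mulVec (w - θ) := by
    rw [Matrix.mulVec_sub, ← hw]; abel
  have cross : (Xt.transpose * Xt).mulVec v ⬝ᵥ X.mulVec (w - θ) = 0 := by
    rw [hQsym, hQX hXtNull, dotProduct_zero]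
  rw [hd, dotProduct_add, add_dotProduct, add_dotProduct, cross,
    dotProduct_comm (X.mulVec (w - θ)), cross]
  have := Finset.sum_nonneg (fun i (_ : i ∈ Finset.univ) =>
    mul_self_nonneg (X.mulVec (w - θ) i))
  simp only [dotProduct] at *
  linarith

lemma XtX_det {X : Matrix (Fin n) (Fin p) ℝ}
    (hXrank : LinearIndependent ℝ fun j : Fin p => fun i : Fin n => X i j) :
    IsUnit (X.transpose * X).det := by
  rw [isUnit_iff_ne_zero]
  intro hdet
  obtain ⟨v, hv0, hv⟩ := (Matrix.exists_mulVec_eq_zero_iff).2 hdet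
  have hXv : X.mulVec v = 0 := by
    refine dotProduct_self_eq_zero.1 ?_
    have h1 := dp1 X (X.mulVec v) v
    rw [Matrix.mulVec_mulVec] at h1
    rw [hv, zero_dotProduct] at h1
    rw [dotProduct_comm, ← h1]
  have := Fintype.linearIndependent_iff.1 hXrank v ?_
  · exact hv0 (funext this)
  · funext i
    simpa [Matrix.mulVec, dotProduct, mul_comm] using congrFun hXv i

lemma Xpinv {X : Matrix (Fin n) (Fin p) ℝ} {Xt : Matrix (Fin q) (Fin n) ℝ}
    (hXrank : LinearIndependent ℝ fun j : Fin p => fun i : Fin n => X i j)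
    (hXtOrth : Xt * Xt.transpose = 1)
    (hXtNull : LinearMap.ker Xt.mulVecLin = LinearMap.range X.mulVecLin) (v : Fin n → ℝ) :
    X.mulVec ((X.transpose * X)⁻¹.mulVec (X.transpose.mulVec v))
      = v - (Xt.transpose * Xt).mulVec v := by
  obtain ⟨w, hw⟩ := hIQ hXtOrth hXtNull (X := X) v
  have h1 : X.transpose.mulVec v = (X.transpose * X).mulVec w := by
    have hsplit : v = (Xt.transpose * Xt).mulVec v + (v - (Xt.transpose * Xt).mulVec v) := by
      abel
    calc X.transpose.mulVec v
        = X.transpose.mulVec ((Xt.transpose * Xt).mulVec v)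
            + X.transpose.mulVec (v - (Xt.transpose * Xt).mulVec v) := by
          rw [← Matrix.mulVec_add, ← hsplit]
      _ = (X.transpose * X).mulVec w := by
          rw [hXTQ hXtNull, zero_add, hw, Matrix.mulVec_mulVec]
  rw [h1, Matrix.mulVec_mulVec w (X.transpose * X)⁻¹ (X.transpose * X),
    Matrix.nonsing_inv_mul _ (XtX_det hXrank), Matrix.one_mulVec, ← hw]

end Mat

section Main
open Matrix

/-- duality between regularized least squares and M-estimation. With
`null(X̃) = image(X)`, `X̃` having orthonormal rows, and `Ỹ = X̃Y`, the minimizers of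
`β ↦ ½‖Ỹ - X̃β‖² + Σᵢ J(βᵢ)` correspond to the minimizers of
`θ ↦ Σᵢ ρ_J(Yᵢ - ⟨Xᵢ,θ⟩)` via `β̂ = Y - Xθ̂ - u` (`u ∈ null(Xᵀ) ∩ ∂ρ_J(Y - Xθ̂)`) and
`θ̂ = (XᵀX)⁻¹Xᵀ(Y - β̂)`. -/
theorem regularized_ls_m_estimation_duality
    (J : ℝ → ℝ) (hJ : ConvexOn ℝ Set.univ J)
    {n p : ℕ} (hpn : p < n)
    (X : Matrix (Fin n) (Fin p) ℝ)
    (hXrank : LinearIndependent ℝ fun j : Fin p => fun i : Fin n => X i j)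
    (Xt : Matrix (Fin (n - p)) (Fin n) ℝ)
    (hXtOrth : Xt * Xt.transpose = 1)
    (hXtNull : LinearMap.ker Xt.mulVecLin = LinearMap.range X.mulVecLin)
    (Y : Fin n → ℝ) :
    -- from M-estimation minimizers to regularized least-squares minimizers
    (∀ θhat : Fin p → ℝ,
      (∀ θ' : Fin p → ℝ,
          ∑ i, moreau J (Y i - X.mulVec θhat i) ≤
            ∑ i, moreau J (Y i - X.mulVec θ' i)) →
      (∃ u : Fin n → ℝ, X.transpose.mulVec u = 0 ∧
          u ∈ vsubderiv (moreau J) (Y - X.mulVec θhat)) ∧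
      (∀ u : Fin n → ℝ, X.transpose.mulVec u = 0 →
        u ∈ vsubderiv (moreau J) (Y - X.mulVec θhat) →
        ∀ β' : Fin n → ℝ,
          (1 / 2) * (∑ i, (Xt.mulVec Y i - Xt.mulVec (Y - X.mulVec θhat - u) i) ^ 2) +
              ∑ i, J ((Y - X.mulVec θhat - u) i) ≤
            (1 / 2) * (∑ i, (Xt.mulVec Y i - Xt.mulVec β' i) ^ 2) + ∑ i, J (β' i))) ∧
    -- from regularized least-squares minimizers to M-estimation minimizers
    (∀ βhat : Fin n → ℝ,
      (∀ β' : Fin n → ℝ,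
          (1 / 2) * (∑ i, (Xt.mulVec Y i - Xt.mulVec βhat i) ^ 2) + ∑ i, J (βhat i) ≤
            (1 / 2) * (∑ i, (Xt.mulVec Y i - Xt.mulVec β' i) ^ 2) + ∑ i, J (β' i)) →
      (∀ θ' : Fin p → ℝ,
          ∑ i, moreau J
              (Y i - X.mulVec ((X.transpose * X)⁻¹.mulVec
                (X.transpose.mulVec (Y - βhat))) i) ≤
            ∑ i, moreau J (Y i - X.mulVec θ' i)) ∧
      (X.transpose.mulVec (Y - X.mulVec ((X.transpose * X)⁻¹.mulVec
          (X.transpose.mulVec (Y - βhat))) - βhat) = 0 ∧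
        (Y - X.mulVec ((X.transpose * X)⁻¹.mulVec (X.transpose.mulVec (Y - βhat))) - βhat) ∈
          vsubderiv (moreau J)
            (Y - X.mulVec ((X.transpose * X)⁻¹.mulVec (X.transpose.mulVec (Y - βhat)))))) := by
  classical
  have φex : ∀ t : ℝ, ∃ x, IsProx J t x := exists_prox hJ
  choose φ hφ using φex
  have dotsq : ∀ (a : Fin n → ℝ), a ⬝ᵥ a = ∑ i, a i ^ 2 := by
    intro a; simp [dotProduct, sq]
  have hsumQ : ∀ b : Fin n → ℝ,
      ∑ i, (Xt.mulVec Y i - Xt.mulVec b i) ^ 2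
        = (Xt.transpose * Xt).mulVec (Y - b) ⬝ᵥ (Xt.transpose * Xt).mulVec (Y - b) := by
    intro b
    rw [sum_sq_dot, ← Matrix.mulVec_sub, quad_eq hXtOrth]
  have hFform : ∀ b : Fin n → ℝ,
      (1/2 : ℝ) * (∑ i, (Xt.mulVec Y i - Xt.mulVec b i) ^ 2) + ∑ i, J (b i)
        = (1/2 : ℝ) * ((Xt.transpose * Xt).mulVec (Y - b) ⬝ᵥ (Xt.transpose * Xt).mulVec (Y - b))
            + ∑ i, J (b i) := by
    intro b; rw [hsumQ]
  -- G(pinv θ of β') ≤ F(β')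
  have key_F_ge_G : ∀ b : Fin n → ℝ,
      ∑ i, moreau J (Y i - X.mulVec ((X.transpose * X)⁻¹.mulVec (X.transpose.mulVec (Y - b))) i)
        ≤ (1/2 : ℝ) * ((Xt.transpose * Xt).mulVec (Y - b) ⬝ᵥ (Xt.transpose * Xt).mulVec (Y - b))
            + ∑ i, J (b i) := by
    intro b
    have hXθ : X.mulVec ((X.transpose * X)⁻¹.mulVec (X.transpose.mulVec (Y - b)))
        = (Y - b) - (Xt.transpose * Xt).mulVec (Y - b) := Xpinv hXrank hXtOrth hXtNull (Y - b)
    have hpt : ∀ i : Fin n,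
        moreau J (Y i - X.mulVec ((X.transpose * X)⁻¹.mulVec (X.transpose.mulVec (Y - b))) i)
          ≤ (1/2 : ℝ) * ((Xt.transpose * Xt).mulVec (Y - b) i) ^ 2 + J (b i) := by
      intro i
      have harg : Y i - X.mulVec ((X.transpose * X)⁻¹.mulVec (X.transpose.mulVec (Y - b))) i
          = b i + (Xt.transpose * Xt).mulVec (Y - b) i := by
        have h := congrFun hXθ i
        simp only [Pi.sub_apply] at h
        rw [h]; ring
      rw [harg]
      have h := moreau_le hJ (b i + (Xt.transpose * Xt).mulVec (Y - b) i) (b i)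
      have e : b i + (Xt.transpose * Xt).mulVec (Y - b) i - b i
          = (Xt.transpose * Xt).mulVec (Y - b) i := by ring
      rw [e] at h
      exact h
    calc ∑ i, moreau J (Y i - X.mulVec ((X.transpose * X)⁻¹.mulVec (X.transpose.mulVec (Y - b))) i)
        ≤ ∑ i, ((1/2 : ℝ) * ((Xt.transpose * Xt).mulVec (Y - b) i) ^ 2 + J (b i)) :=
          Finset.sum_le_sum fun i _ => hpt i
      _ = (1/2 : ℝ) * ((Xt.transpose * Xt).mulVec (Y - b) ⬝ᵥ (Xt.transpose * Xt).mulVec (Y - b))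
            + ∑ i, J (b i) := by
          rw [Finset.sum_add_distrib, ← Finset.mul_sum, dotsq]
  -- F(prox β of θ') ≤ G(θ')
  have key_G_ge_F : ∀ θ' : Fin p → ℝ,
      (1/2 : ℝ) * ((Xt.transpose * Xt).mulVec (Y - fun i => φ (Y i - X.mulVec θ' i)) ⬝ᵥ
          (Xt.transpose * Xt).mulVec (Y - fun i => φ (Y i - X.mulVec θ' i)))
        + ∑ i, J (φ (Y i - X.mulVec θ' i))
      ≤ ∑ i, moreau J (Y i - X.mulVec θ' i) := by
    intro θ'
    set b : Fin n → ℝ := fun i => φ (Y i - X.mulVec θ' i) with hb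
    have h1 : (Xt.transpose * Xt).mulVec (Y - b) ⬝ᵥ (Xt.transpose * Xt).mulVec (Y - b)
        ≤ ∑ i, (Y i - X.mulVec θ' i - b i) ^ 2 := by
      have h2 := pythagoras hXtOrth hXtNull (Y - b) θ'
      have h3 : ∑ i, (Y i - X.mulVec θ' i - b i) ^ 2
          = ((Y - b) - X.mulVec θ') ⬝ᵥ ((Y - b) - X.mulVec θ') := by
        rw [dotsq]
        refine Finset.sum_congr rfl fun i _ => ?_
        simp only [Pi.sub_apply]
        ring
      rw [h3]; exact h2
    have h4 : ∑ i, moreau J (Y i - X.mulVec θ' i)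
        = ∑ i, ((1/2 : ℝ) * (Y i - X.mulVec θ' i - b i) ^ 2 + J (b i)) :=
      Finset.sum_congr rfl fun i _ => moreau_prox_eq hJ (hφ (Y i - X.mulVec θ' i))
    rw [h4, Finset.sum_add_distrib, ← Finset.mul_sum]
    have h5 := mul_le_mul_of_nonneg_left h1 (by norm_num : (0:ℝ) ≤ 1/2)
    linarith
  have hQu : ∀ u : Fin n → ℝ, X.transpose.mulVec u = 0
      → (Xt.transpose * Xt).mulVec u = u := by
    intro u hu
    obtain ⟨w, hw⟩ := hIQ hXtOrth hXtNull (X := X) u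
    have h0 : (u - (Xt.transpose * Xt).mulVec u) ⬝ᵥ (u - (Xt.transpose * Xt).mulVec u) = 0 := by
      nth_rewrite 2 [hw]
      rw [sub_dotProduct, ← dp1 X u w, hu, zero_dotProduct,
        hQsym, hQX hXtNull, dotProduct_zero, sub_zero]
    have h1 : u - (Xt.transpose * Xt).mulVec u = 0 := dotProduct_self_eq_zero.1 h0
    have := sub_eq_zero.1 h1
    exact this.symm
  constructor
  · -- direction 1
    intro θhat hmin
    set u0 : Fin n → ℝ := fun i => (Y i - X.mulVec θhat i) - φ (Y i - X.mulVec θhat i) with hu0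
    have hXtu : X.transpose.mulVec u0 = 0 := by
      by_contra hne
      set a : Fin p → ℝ := X.transpose.mulVec u0 with ha
      have hc : 0 < a ⬝ᵥ a :=
        lt_of_le_of_ne (dot_self_nonneg a)
          (Ne.symm fun h => hne (dotProduct_self_eq_zero.1 h))
      set c : ℝ := a ⬝ᵥ a with hcdef
      set Cq : ℝ := X.mulVec a ⬝ᵥ X.mulVec a with hCq
      have hCq0 : 0 ≤ Cq := dot_self_nonneg _
      set t : ℝ := c / (Cq + 1) with ht
      have ht0 : 0 < t := div_pos hc (by linarith)
      have htmul : t * (Cq + 1) = c := div_mul_cancel₀ _ (by linarith)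
      have htc : t * Cq + t = c := by ring_nf; ring_nf at htmul; linarith
      have hub : ∀ i : Fin n, moreau J (Y i - X.mulVec (θhat + t • a) i)
          ≤ moreau J (Y i - X.mulVec θhat i) + u0 i * (-(t • X.mulVec a) i)
              + (1/2 : ℝ) * ((-(t • X.mulVec a)) i) ^ 2 := by
        intro i
        have h2 : Y i - X.mulVec (θhat + t • a) i - (Y i - X.mulVec θhat i)
            = (-(t • X.mulVec a)) i := by
          simp only [Matrix.mulVec_add, Matrix.mulVec_smul, Pi.add_apply, Pi.smul_apply,
            Pi.neg_apply, smul_eq_mul]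
          ring
        have h := moreau_upper hJ (hφ (Y i - X.mulVec θhat i)) (Y i - X.mulVec (θhat + t • a) i)
        rw [h2] at h
        exact h
      have hS1 : ∑ i, u0 i * (-(t • X.mulVec a)) i = -(t * c) := by
        have : ∑ i, u0 i * (-(t • X.mulVec a)) i = u0 ⬝ᵥ (-(t • X.mulVec a)) := rfl
        rw [this, dotProduct_neg, dotProduct_smul, smul_eq_mul, ← dp1 X u0 a, ← ha,
          ← hcdef]
      have hS2 : ∑ i, ((-(t • X.mulVec a)) i) ^ 2 = t ^ 2 * Cq := by
        rw [← dotsq, neg_dotProduct, dotProduct_neg, neg_neg,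
          smul_dotProduct, dotProduct_smul, smul_eq_mul, smul_eq_mul, ← hCq]
        ring
      have hsum : ∑ i, moreau J (Y i - X.mulVec (θhat + t • a) i)
          ≤ ∑ i, moreau J (Y i - X.mulVec θhat i) + (-(t * c)) + (1/2 : ℝ) * (t ^ 2 * Cq) := by
        calc ∑ i, moreau J (Y i - X.mulVec (θhat + t • a) i)
            ≤ ∑ i, (moreau J (Y i - X.mulVec θhat i) + u0 i * (-(t • X.mulVec a)) i
                + (1/2 : ℝ) * ((-(t • X.mulVec a)) i) ^ 2) :=
              Finset.sum_le_sum fun i _ => hub i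
          _ = ∑ i, moreau J (Y i - X.mulVec θhat i) + (-(t * c)) + (1/2 : ℝ) * (t ^ 2 * Cq) := by
              rw [Finset.sum_add_distrib, Finset.sum_add_distrib, ← Finset.mul_sum, hS1, hS2]
      have hchain := hmin (θhat + t • a)
      have hfin : t * c ≤ (1/2 : ℝ) * (t ^ 2 * Cq) := by linarith
      have h7 : t * (t * Cq) = t * (c - t) := by rw [show t * Cq = c - t by linarith]
      nlinarith [mul_pos ht0 hc, mul_pos ht0 ht0]
    constructor
    · exact ⟨u0, hXtu, vsubderiv_of_coord fun i y => moreau_lower hJ (hφ (Y i - X.mulVec θhat i)) y⟩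
    · intro u hXu husub β'
      have hG : (1/2 : ℝ) * (∑ i, (Xt.mulVec Y i - Xt.mulVec (Y - X.mulVec θhat - u) i) ^ 2)
          + ∑ i, J ((Y - X.mulVec θhat - u) i) = ∑ i, moreau J (Y i - X.mulVec θhat i) := by
        have hYb : Y - (Y - X.mulVec θhat - u) = X.mulVec θhat + u := by abel
        have hQb : (Xt.transpose * Xt).mulVec (Y - (Y - X.mulVec θhat - u)) = u := by
          rw [hYb, Matrix.mulVec_add, hQX hXtNull, zero_add, hQu u hXu]
        rw [hsumQ, hQb, dotsq]
        have hcoord : ∀ i : Fin n, moreau J (Y i - X.mulVec θhat i)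
            = (1/2 : ℝ) * (u i) ^ 2 + J ((Y - X.mulVec θhat - u) i) := by
          intro i
          have hui := vsubderiv_coord husub i
          have h := moreau_subgrad_val hJ hui
          simpa [Pi.sub_apply] using h
        rw [Finset.sum_congr rfl fun i (_ : i ∈ Finset.univ) => hcoord i,
          Finset.sum_add_distrib, ← Finset.mul_sum]
      rw [hG, hFform]
      calc ∑ i, moreau J (Y i - X.mulVec θhat i)
          ≤ ∑ i, moreau J
              (Y i - X.mulVec ((X.transpose * X)⁻¹.mulVec (X.transpose.mulVec (Y - β'))) i) :=
            hmin _
        _ ≤ (1/2 : ℝ) * ((Xt.transpose * Xt).mulVec (Y - β') ⬝ᵥ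
              (Xt.transpose * Xt).mulVec (Y - β')) + ∑ i, J (β' i) := key_F_ge_G β'
  · -- direction 2
    intro βhat hminF
    set θh : Fin p → ℝ := (X.transpose * X)⁻¹.mulVec (X.transpose.mulVec (Y - βhat)) with hθh
    have hXθ : X.mulVec θh = (Y - βhat) - (Xt.transpose * Xt).mulVec (Y - βhat) :=
      Xpinv hXrank hXtOrth hXtNull (Y - βhat)
    have hzb : Y - X.mulVec θh - βhat = (Xt.transpose * Xt).mulVec (Y - βhat) := by
      rw [hXθ]; abel
    have hFhat : (1/2 : ℝ) * (∑ i, (Y i - X.mulVec θh i - βhat i) ^ 2) + ∑ i, J (βhat i)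
        = (1/2 : ℝ) * ((Xt.transpose * Xt).mulVec (Y - βhat) ⬝ᵥ
            (Xt.transpose * Xt).mulVec (Y - βhat)) + ∑ i, J (βhat i) := by
      have e : ∑ i, (Y i - X.mulVec θh i - βhat i) ^ 2
          = (Xt.transpose * Xt).mulVec (Y - βhat) ⬝ᵥ (Xt.transpose * Xt).mulVec (Y - βhat) := by
        rw [dotsq]
        refine Finset.sum_congr rfl fun i _ => ?_
        have := congrFun hzb i
        simp only [Pi.sub_apply] at this
        rw [this]
      rw [e]
    have hsep0 : ∀ b : Fin n → ℝ,
        (1/2 : ℝ) * (∑ i, (Y i - X.mulVec θh i - βhat i) ^ 2) + ∑ i, J (βhat i)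
          ≤ (1/2 : ℝ) * (∑ i, (Y i - X.mulVec θh i - b i) ^ 2) + ∑ i, J (b i) := by
      intro b
      have h1 : (Xt.transpose * Xt).mulVec (Y - b) ⬝ᵥ (Xt.transpose * Xt).mulVec (Y - b)
          ≤ ∑ i, (Y i - X.mulVec θh i - b i) ^ 2 := by
        have h2 := pythagoras hXtOrth hXtNull (Y - b) θh
        have h3 : ∑ i, (Y i - X.mulVec θh i - b i) ^ 2
            = ((Y - b) - X.mulVec θh) ⬝ᵥ ((Y - b) - X.mulVec θh) := by
          rw [dotsq]
          refine Finset.sum_congr rfl fun i _ => ?_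
          simp only [Pi.sub_apply]
          ring
        rw [h3]; exact h2
      have h5 := hminF b
      rw [hFform, hFform] at h5
      have h6 := mul_le_mul_of_nonneg_left h1 (by norm_num : (0:ℝ) ≤ 1/2)
      linarith [hFhat]
    have hprox : ∀ i : Fin n, IsProx J (Y i - X.mulVec θh i) (βhat i) := by
      intro i y
      have h := hsep0 (Function.update βhat i y)
      have e1 : ∑ j, ((Y j - X.mulVec θh j - Function.update βhat i y j) ^ 2
            - (Y j - X.mulVec θh j - βhat j) ^ 2)
          = (Y i - X.mulVec θh i - y) ^ 2 - (Y i - X.mulVec θh i - βhat i) ^ 2 := by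
        rw [Finset.sum_eq_single i]
        · simp
        · intro j _ hj; simp [Function.update_of_ne hj]
        · simp
      have e2 : ∑ j, (J (Function.update βhat i y j) - J (βhat j)) = J y - J (βhat i) := by
        rw [Finset.sum_eq_single i]
        · simp
        · intro j _ hj; simp [Function.update_of_ne hj]
        · simp
      rw [Finset.sum_sub_distrib] at e1 e2
      linarith
    refine ⟨?_, ?_, ?_⟩
    · intro θ'
      calc ∑ i, moreau J (Y i - X.mulVec θh i)
          ≤ (1/2 : ℝ) * ((Xt.transpose * Xt).mulVec (Y - βhat) ⬝ᵥ
              (Xt.transpose * Xt).mulVec (Y - βhat)) + ∑ i, J (βhat i) := key_F_ge_G βhat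
        _ ≤ (1/2 : ℝ) * ((Xt.transpose * Xt).mulVec (Y - fun i => φ (Y i - X.mulVec θ' i)) ⬝ᵥ
              (Xt.transpose * Xt).mulVec (Y - fun i => φ (Y i - X.mulVec θ' i)))
              + ∑ i, J (φ (Y i - X.mulVec θ' i)) := by
            have h5 := hminF (fun i => φ (Y i - X.mulVec θ' i))
            rw [hFform, hFform] at h5
            exact h5
        _ ≤ ∑ i, moreau J (Y i - X.mulVec θ' i) := key_G_ge_F θ'
    · rw [hzb]
      exact hXTQ hXtNull _
    · apply vsubderiv_of_coord
      intro i y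
      have h := moreau_lower hJ (hprox i) y
      simpa [Pi.sub_apply] using h

end Main
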